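/- Let Ω ⊆ ℝ³ be open and u : Ω → ℝ³ three times continuously differentiable. Then curl((curl(ε u))ᵀ) = 0 on Ω, where ε u = (grad u + (grad u)ᵀ)/2 is the symmetric gradient; that is, J ∘ ε = 0. -/

import Mathlib

/-!
Every entry of `curl (curl (ε u))ᵀ` is a Saint-Venant expression
`∂_a∂_c ε_bd - ∂_a∂_d ε_bc - ∂_b∂_c ε_ad + ∂_b∂_d ε_ac`. Substituting `ε_pq = (∂_q u_p + ∂_p u_q)/2`
turns it into a signed sum of eight third partial derivatives of components of `u`, which cancel in
pairs because third partials of a `C³` function commute.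
-/

open Matrix

/-- The partial derivative `∂ⱼ f` of a scalar field on `ℝ³`. -/
noncomputable def pd (j : Fin 3) (f : (Fin 3 → ℝ) → ℝ) (x : Fin 3 → ℝ) : ℝ :=
  fderiv ℝ f x (Pi.single j 1)

/-- The curl of a vector field `u : ℝ³ → ℝ³`. -/
noncomputable def curlVec (u : (Fin 3 → ℝ) → (Fin 3 → ℝ)) (x : Fin 3 → ℝ) : Fin 3 → ℝ :=
  ![pd 1 (fun y => u y 2) x - pd 2 (fun y => u y 1) x,
    pd 2 (fun y => u y 0) x - pd 0 (fun y => u y 2) x,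
    pd 0 (fun y => u y 1) x - pd 1 (fun y => u y 0) x]

/-- The row-wise curl of a matrix field. -/
noncomputable def curlMat (τ : (Fin 3 → ℝ) → Matrix (Fin 3) (Fin 3) ℝ)
    (x : Fin 3 → ℝ) : Matrix (Fin 3) (Fin 3) ℝ :=
  Matrix.of fun i j => curlVec (fun y => τ y i) x j

/-- The Jacobian matrix `(grad u)ᵢⱼ = ∂ⱼuᵢ` of a vector field `u : ℝ³ → ℝ³`. -/
noncomputable def gradM (u : (Fin 3 → ℝ) → (Fin 3 → ℝ)) (x : Fin 3 → ℝ) :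
    Matrix (Fin 3) (Fin 3) ℝ :=
  Matrix.of fun i j => pd j (fun y => u y i) x

/-- The symmetric gradient `ε u = (grad u + (grad u)ᵀ)/2`. -/
noncomputable def symGrad (u : (Fin 3 → ℝ) → (Fin 3 → ℝ)) (x : Fin 3 → ℝ) :
    Matrix (Fin 3) (Fin 3) ℝ :=
  (1 / 2 : ℝ) • (gradM u x + (gradM u x)ᵀ)

section PartialDerivative

variable {Ω : Set (Fin 3 → ℝ)} {f g : (Fin 3 → ℝ) → ℝ} {x : Fin 3 → ℝ}

lemma pd_congr_of_eqOn (hΩ : IsOpen Ω) (h : Set.EqOn f g Ω) (hx : x ∈ Ω) (j : Fin 3) :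
    pd j f x = pd j g x := by
  rw [pd, pd, (h.eventuallyEq_of_mem (hΩ.mem_nhds hx)).fderiv_eq]

lemma pd_sub (hf : DifferentiableAt ℝ f x) (hg : DifferentiableAt ℝ g x) (j : Fin 3) :
    pd j (fun y => f y - g y) x = pd j f x - pd j g x := by
  simp [pd, fderiv_fun_sub hf hg]

lemma pd_const_mul_add (hf : DifferentiableAt ℝ f x) (hg : DifferentiableAt ℝ g x) (c : ℝ)
    (j : Fin 3) : pd j (fun y => c * (f y + g y)) x = c * (pd j f x + pd j g x) := by
  rw [pd, fderiv_const_mul (hf.fun_add hg), fderiv_fun_add hf hg]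
  simp [pd, mul_add]

lemma ContDiffOn.pd {n m : WithTop ℕ∞} (hf : ContDiffOn ℝ n f Ω) (hΩ : IsOpen Ω)
    (hmn : m + 1 ≤ n) (j : Fin 3) : ContDiffOn ℝ m (pd j f) Ω :=
  (hf.fderiv_of_isOpen hΩ hmn).clm_apply contDiffOn_const

lemma pd_pd_eq_fderiv_fderiv (hf : DifferentiableAt ℝ (fderiv ℝ f) x) (a b : Fin 3) :
    pd a (pd b f) x = fderiv ℝ (fderiv ℝ f) x (Pi.single a 1) (Pi.single b 1) := by
  change fderiv ℝ (fun y => fderiv ℝ f y (Pi.single b 1)) x (Pi.single a 1) = _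
  simp [fderiv_clm_apply hf (differentiableAt_const _)]

lemma pd_pd_comm (hf : ContDiffAt ℝ 2 f x) (a b : Fin 3) : pd a (pd b f) x = pd b (pd a f) x := by
  have hdiff : DifferentiableAt ℝ (fderiv ℝ f) x :=
    (hf.fderiv_right (m := 1) le_rfl).differentiableAt one_ne_zero
  rw [pd_pd_eq_fderiv_fderiv hdiff, pd_pd_eq_fderiv_fderiv hdiff,
    hf.isSymmSndFDerivAt (by simp)]

end PartialDerivative

section ThirdPartialDerivative

variable {Ω : Set (Fin 3 → ℝ)} {f : (Fin 3 → ℝ) → ℝ} {x : Fin 3 → ℝ}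

lemma pd_pd_pd_comm_left (hΩ : IsOpen Ω) (hf : ContDiffOn ℝ 3 f Ω) (hx : x ∈ Ω)
    (a b c : Fin 3) : pd a (pd b (pd c f)) x = pd b (pd a (pd c f)) x :=
  pd_pd_comm ((hf.pd hΩ (by norm_num) c).contDiffAt (hΩ.mem_nhds hx)) a b

lemma pd_pd_pd_comm_right (hΩ : IsOpen Ω) (hf : ContDiffOn ℝ 2 f Ω) (hx : x ∈ Ω)
    (a b c : Fin 3) : pd a (pd b (pd c f)) x = pd a (pd c (pd b f)) x :=
  pd_congr_of_eqOn hΩ (fun _ hy => pd_pd_comm (hf.contDiffAt (hΩ.mem_nhds hy)) b c) hx a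

end ThirdPartialDerivative

section SymmetricGradient

variable {Ω : Set (Fin 3 → ℝ)} {u : (Fin 3 → ℝ) → (Fin 3 → ℝ)} {x : Fin 3 → ℝ}

lemma symGrad_apply (u : (Fin 3 → ℝ) → (Fin 3 → ℝ)) (z : Fin 3 → ℝ) (p q : Fin 3) :
    symGrad u z p q = 1 / 2 * (pd q (fun y => u y p) z + pd p (fun y => u y q) z) := by
  simp [symGrad, gradM]

lemma ContDiffOn.symGrad_apply {n m : WithTop ℕ∞} (hu : ContDiffOn ℝ n u Ω) (hΩ : IsOpen Ω)
    (hmn : m + 1 ≤ n) (p q : Fin 3) : ContDiffOn ℝ m (fun z => symGrad u z p q) Ω := by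
  simp only [_root_.symGrad_apply]
  exact contDiffOn_const.mul
    (((contDiffOn_pi.1 hu p).pd hΩ hmn q).add ((contDiffOn_pi.1 hu q).pd hΩ hmn p))

lemma pd_pd_symGrad_apply (hΩ : IsOpen Ω) (hu : ContDiffOn ℝ 3 u Ω) (hx : x ∈ Ω)
    (α β p q : Fin 3) :
    pd α (pd β (fun z => symGrad u z p q)) x =
      1 / 2 * (pd α (pd β (pd q (fun y => u y p))) x
        + pd α (pd β (pd p (fun y => u y q))) x) := by
  have hu₂ (k j : Fin 3) : ContDiffOn ℝ 2 (pd j (fun y => u y k)) Ω :=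
    (contDiffOn_pi.1 hu k).pd hΩ (by norm_num) j
  have hdiff (k j : Fin 3) : DifferentiableAt ℝ (pd β (pd j (fun y => u y k))) x :=
    (((hu₂ k j).pd hΩ (m := 1) (by norm_num) β).differentiableOn one_ne_zero).differentiableAt
      (hΩ.mem_nhds hx)
  have inner : Set.EqOn (pd β (fun z => symGrad u z p q))
      (fun y => 1 / 2 * (pd β (pd q (fun y => u y p)) y + pd β (pd p (fun y => u y q)) y)) Ω :=
    fun y hy => by
      simp only [_root_.symGrad_apply]
      exact pd_const_mul_add
        (((hu₂ p q).differentiableOn (by norm_num)).differentiableAt (hΩ.mem_nhds hy))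
        (((hu₂ q p).differentiableOn (by norm_num)).differentiableAt (hΩ.mem_nhds hy)) _ β
  rw [pd_congr_of_eqOn hΩ inner hx, pd_const_mul_add (hdiff p q) (hdiff q p)]

theorem saint_venant_compatibility (hΩ : IsOpen Ω) (hu : ContDiffOn ℝ 3 u Ω) (hx : x ∈ Ω)
    (a b c d : Fin 3) :
    pd a (fun y => pd c (fun z => symGrad u z b d) y - pd d (fun z => symGrad u z b c) y) x
      - pd b (fun y => pd c (fun z => symGrad u z a d) y - pd d (fun z => symGrad u z a c) y) x
      = 0 := by
  have hdiff (p q γ : Fin 3) : DifferentiableAt ℝ (pd γ (fun z => symGrad u z p q)) x :=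
    (((hu.symGrad_apply hΩ (m := 2) (by norm_num) p q).pd hΩ (m := 1) (by norm_num)
      γ).differentiableOn one_ne_zero).differentiableAt (hΩ.mem_nhds hx)
  rw [pd_sub (hdiff b d c) (hdiff b c d), pd_sub (hdiff a d c) (hdiff a c d),
    pd_pd_symGrad_apply hΩ hu hx a c b d, pd_pd_symGrad_apply hΩ hu hx a d b c,
    pd_pd_symGrad_apply hΩ hu hx b c a d, pd_pd_symGrad_apply hΩ hu hx b d a c]
  have left (α β γ k : Fin 3) := pd_pd_pd_comm_left hΩ (contDiffOn_pi.1 hu k) hx α β γ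
  have right (α β γ k : Fin 3) :=
    pd_pd_pd_comm_right hΩ ((contDiffOn_pi.1 hu k).of_le (by norm_num)) hx α β γ
  -- The eight third partials cancel in pairs; the two mixed pairs need three transpositions each.
  linarith [right a c d b, right b c d a, left a c b d, right c a b d, left b c a d,
    left a d b c, right d a b c, left b d a c]

end SymmetricGradient

/-- If `u : Ω → ℝ³` is `C³` on an open set `Ω ⊆ ℝ³`, then
`curl((curl(ε u))ᵀ) = 0` on `Ω`; that is, `J ∘ ε = 0`. -/
theorem J_eps_eq_zero (Ω : Set (Fin 3 → ℝ)) (hΩ : IsOpen Ω)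
    (u : (Fin 3 → ℝ) → (Fin 3 → ℝ)) (hu : ContDiffOn ℝ 3 u Ω) :
    ∀ x ∈ Ω, curlMat (fun y => (curlMat (fun z => symGrad u z) y)ᵀ) x = 0 := by
  intro x hx
  ext i j
  fin_cases i <;> fin_cases j <;>
    simp only [curlMat, curlVec, of_apply, transpose_apply, cons_val_zero, cons_val_one,
      Matrix.zero_apply, Fin.isValue, Fin.mk_one, Fin.zero_eta] <;>
    exact saint_venant_compatibility hΩ hu hx _ _ _ _
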